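/- The explicit temperature solves the bioheat equation during the first pulse: let ρ, c_p > 0 and k, c_b, ρ_b, w, μₐ, μₜ, S_in, T_b, ζ_in be real constants; set ζ₀ := (k·μₜ² − c_b·ρ_b·w)/(ρ·c_p) and assume ζ_in ≠ ζ₀ and k·μₜ² ≠ c_b·ρ_b·w. Define T(z,t) := T_b + μₐ·S_in·exp(−μₜ·z)·[ (exp(ζ_in·t) − exp(ζ₀·t))/(ρ·c_p·(ζ_in − ζ₀)) + (1 − exp(ζ₀·t))/(k·μₜ² − c_b·ρ_b·w) ] and φ_f(z,t) := S_in·(exp(ζ_in·t) − 1)·exp(−μₜ·z). Then for all z, t ∈ ℝ: ρ·c_p·∂ₜT − k·∂²_z T + c_b·ρ_b·w·(T − T_b) = μₐ·φ_f(z,t), and T(z,0) = T_b. -/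

import Mathlib

/-- The explicit temperature solves the bioheat equation during the first pulse. -/
theorem temperature_solves_bioheat_first_pulse
    (ρ cp k cb ρb w μa μt Sin Tb ζin : ℝ) (hρ : 0 < ρ) (hcp : 0 < cp)
    (ζ₀ : ℝ) (hζ₀ : ζ₀ = (k * μt ^ 2 - cb * ρb * w) / (ρ * cp))
    (hne : ζin ≠ ζ₀) (hne' : k * μt ^ 2 ≠ cb * ρb * w)
    (T : ℝ → ℝ → ℝ)
    (hT : T = fun z t => Tb + μa * Sin * Real.exp (-μt * z) *
      ((Real.exp (ζin * t) - Real.exp (ζ₀ * t)) / (ρ * cp * (ζin - ζ₀))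
        + (1 - Real.exp (ζ₀ * t)) / (k * μt ^ 2 - cb * ρb * w)))
    (φf : ℝ → ℝ → ℝ)
    (hφf : φf = fun z t => Sin * (Real.exp (ζin * t) - 1) * Real.exp (-μt * z)) :
    (∀ z t : ℝ,
      ρ * cp * deriv (fun t' => T z t') t
        - k * deriv (deriv (fun z' => T z' t)) z
        + cb * ρb * w * (T z t - Tb) = μa * φf z t) ∧
    (∀ z : ℝ, T z 0 = Tb) := by
  have hρcp : ρ * cp ≠ 0 := by positivity
  have hD2 : k * μt ^ 2 - cb * ρb * w ≠ 0 := sub_ne_zero.mpr hne'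
  have hD1 : ρ * cp * (ζin - ζ₀) ≠ 0 := mul_ne_zero hρcp (sub_ne_zero.mpr hne)
  have hζ₀' : ρ * cp * ζ₀ = k * μt ^ 2 - cb * ρb * w := by
    rw [hζ₀]; field_simp
  subst hT hφf
  constructor
  · intro z t
    -- time derivative
    have e1 : ∀ s : ℝ, HasDerivAt (fun t' : ℝ => Real.exp (ζin * t'))
        (Real.exp (ζin * s) * ζin) s := fun s => by
      simpa using ((hasDerivAt_id s).const_mul ζin).exp
    have e0 : ∀ s : ℝ, HasDerivAt (fun t' : ℝ => Real.exp (ζ₀ * t'))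
        (Real.exp (ζ₀ * s) * ζ₀) s := fun s => by
      simpa using ((hasDerivAt_id s).const_mul ζ₀).exp
    have ht : HasDerivAt (fun t' : ℝ => Tb + μa * Sin * Real.exp (-μt * z) *
        ((Real.exp (ζin * t') - Real.exp (ζ₀ * t')) / (ρ * cp * (ζin - ζ₀))
          + (1 - Real.exp (ζ₀ * t')) / (k * μt ^ 2 - cb * ρb * w)))
        (μa * Sin * Real.exp (-μt * z) *
          ((Real.exp (ζin * t) * ζin - Real.exp (ζ₀ * t) * ζ₀) / (ρ * cp * (ζin - ζ₀))
            + (0 - Real.exp (ζ₀ * t) * ζ₀) / (k * μt ^ 2 - cb * ρb * w))) t := by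
      exact ((((e1 t).sub (e0 t)).div_const _).add
        (((hasDerivAt_const t (1:ℝ)).sub (e0 t)).div_const _)).const_mul _ |>.const_add Tb
    have hdt := ht.deriv
    -- first z derivative
    have hz1 : deriv (fun z' : ℝ => Tb + μa * Sin * Real.exp (-μt * z') *
        ((Real.exp (ζin * t) - Real.exp (ζ₀ * t)) / (ρ * cp * (ζin - ζ₀))
          + (1 - Real.exp (ζ₀ * t)) / (k * μt ^ 2 - cb * ρb * w)))
        = fun z' : ℝ => μa * Sin * (Real.exp (-μt * z') * (-μt)) *
        ((Real.exp (ζin * t) - Real.exp (ζ₀ * t)) / (ρ * cp * (ζin - ζ₀))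
          + (1 - Real.exp (ζ₀ * t)) / (k * μt ^ 2 - cb * ρb * w)) := by
      funext z'
      have hx : HasDerivAt (fun z'' : ℝ => Real.exp (-μt * z''))
          (Real.exp (-μt * z') * (-μt)) z' := by
        simpa using ((hasDerivAt_id z').const_mul (-μt)).exp
      exact ((((hx.const_mul (μa * Sin)).mul_const _).const_add Tb).deriv).trans (by ring)
    have hz2 : deriv (deriv (fun z' : ℝ => Tb + μa * Sin * Real.exp (-μt * z') *
        ((Real.exp (ζin * t) - Real.exp (ζ₀ * t)) / (ρ * cp * (ζin - ζ₀))
          + (1 - Real.exp (ζ₀ * t)) / (k * μt ^ 2 - cb * ρb * w)))) z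
        = μa * Sin * (Real.exp (-μt * z) * (-μt) * (-μt)) *
        ((Real.exp (ζin * t) - Real.exp (ζ₀ * t)) / (ρ * cp * (ζin - ζ₀))
          + (1 - Real.exp (ζ₀ * t)) / (k * μt ^ 2 - cb * ρb * w)) := by
      rw [hz1]
      have hx : HasDerivAt (fun z'' : ℝ => Real.exp (-μt * z''))
          (Real.exp (-μt * z) * (-μt)) z := by
        simpa using ((hasDerivAt_id z).const_mul (-μt)).exp
      have : HasDerivAt (fun z' : ℝ => μa * Sin * (Real.exp (-μt * z') * (-μt)) *
          ((Real.exp (ζin * t) - Real.exp (ζ₀ * t)) / (ρ * cp * (ζin - ζ₀))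
            + (1 - Real.exp (ζ₀ * t)) / (k * μt ^ 2 - cb * ρb * w)))
          (μa * Sin * (Real.exp (-μt * z) * (-μt) * (-μt)) *
          ((Real.exp (ζin * t) - Real.exp (ζ₀ * t)) / (ρ * cp * (ζin - ζ₀))
            + (1 - Real.exp (ζ₀ * t)) / (k * μt ^ 2 - cb * ρb * w))) z := by
        have := ((hx.mul_const (-μt)).const_mul (μa * Sin)).mul_const
          ((Real.exp (ζin * t) - Real.exp (ζ₀ * t)) / (ρ * cp * (ζin - ζ₀))
            + (1 - Real.exp (ζ₀ * t)) / (k * μt ^ 2 - cb * ρb * w))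
        convert this using 1
      exact this.deriv
    simp only [hdt, hz2]
    generalize Real.exp (ζin * t) = E1
    generalize Real.exp (ζ₀ * t) = E0
    generalize Real.exp (-μt * z) = Z
    rw [hζ₀] at hne ⊢
    have hζne : ζin * (ρ * cp) - (k * μt ^ 2 - cb * ρb * w) ≠ 0 := by
      intro h
      apply hne
      field_simp
      linarith
    have hζne2 : ρ * cp * ζin - (k * μt ^ 2 - cb * ρb * w) ≠ 0 := by
      contrapose! hζne; linarith
    field_simp
    ring
  · intro z
    simp
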